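/- Suppose A1 holds and F = f + ψ is bounded below. Let ε > 0, m ≥ 1 an integer, x₀ ∈ Q, and let B be a symmetric matrix with ‖B − ∇²f(x₀)‖ ≤ (√n·L/2)·h, where σ ≥ 2⁴·(2/3)^{1/3}·m·L and 0 < h ≤ [3·σ^{3/2}·ε^{3/2} / (2⁷·192·n^{3/2}·L³)]^{1/3}. Let x₁, …, x_m ∈ Q be such that for each t = 0, …, m−1, x_{t+1} satisfies M_{x_t,σ}(x_{t+1}) + ψ(x_{t+1}) ≤ F(x_t) and ‖∇M_{x_t,σ}(x_{t+1}) + ψ'(x_{t+1})‖ ≤ (σ/4)‖x_{t+1} − x_t‖² for some ψ'(x_{t+1}) ∈ ∂ψ(x_{t+1}), where in the model M_{x_t,σ} one takes g = ∇f(x_t) and the same matrix B for all t. Then either min_{1 ≤ t ≤ m} ‖∇f(x_t) + ψ'(x_t)‖ ≤ ε, or F(x₀) − F(x_m) ≥ m·ε^{3/2} / (2·192·σ^{1/2}). -/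

import Mathlib

/-!
Write `r t = ‖x (t+1) - x t‖` and `D t = ‖B - ∇²f (x t)‖`; Lipschitz continuity of the Hessian
gives `D t ≤ δ + L * ∑ s < t, r s` with `δ = √n L h / 2`. Comparing the model with the cubic
Taylor majorant of `f` yields a decrease `F (x t) - F (x (t+1)) ≥ (σ/6 - L/3) r³ - D r² / 2` per
step, and, when the new subgradient has norm above `ε`, also `ε ≤ (L + 3σ/4) r² + D r`. Young's
inequality turns both into statements about `r³` and `D³`, and the power-mean inequality gives
`∑ D³ ≤ 4 m δ³ + 4 (m L)³ ∑ r³`. The choice of `σ` makes `(m L)³` small against `σ³` and the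
choice of `h` makes `δ³` small against `(σ ε)^{3/2}`, so summing over the block gives
`σ² (F (x 0) - F (x m)) ≥ m (σ ε)^{3/2} / 384`.
-/

open RealInnerProductSpace Finset
open scoped NNReal

section
variable {E : Type*} [NormedAddCommGroup E] [InnerProductSpace ℝ E] [CompleteSpace E]
  {f : E → ℝ} {K : ℝ≥0}

lemma ContDiff.contDiff_gradient (hf : ContDiff ℝ 2 f) : ContDiff ℝ 1 (gradient f) :=
  (InnerProductSpace.toDual ℝ E).symm.contDiff.comp (hf.fderiv_right (by norm_num))

lemma norm_gradient_sub_sub_fderiv_le (hf : ContDiff ℝ 2 f)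
    (hH : LipschitzWith K (fderiv ℝ (gradient f))) (u v : E) :
    ‖gradient f v - gradient f u - fderiv ℝ (gradient f) u (v - u)‖ ≤ K * ‖v - u‖ ^ 2 := by
  have hbound : ∀ z ∈ segment ℝ u v,
      ‖fderiv ℝ (gradient f) z - fderiv ℝ (gradient f) u‖ ≤ K * ‖v - u‖ := by
    intro z hz
    refine (hH.norm_sub_le z u).trans (mul_le_mul_of_nonneg_left ?_ K.2)
    rw [segment_eq_image_lineMap] at hz
    obtain ⟨τ, ⟨hτ0, hτ1⟩, rfl⟩ := hz
    rw [AffineMap.lineMap_apply_module', add_sub_cancel_right, norm_smul,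
      Real.norm_of_nonneg hτ0]
    exact mul_le_of_le_one_left (norm_nonneg _) hτ1
  have := (convex_segment u v).norm_image_sub_le_of_norm_fderiv_le'
    (fun z _ => (hf.contDiff_gradient.differentiable one_ne_zero) z) hbound
    (left_mem_segment ℝ u v) (right_mem_segment ℝ u v)
  rwa [mul_assoc, ← sq] at this

lemma hasDerivAt_comp_add_smul (hf : Differentiable ℝ f) (u r : E) (τ : ℝ) :
    HasDerivAt (fun s : ℝ => f (u + s • r)) ⟪gradient f (u + τ • r), r⟫ τ := by
  have hline : HasDerivAt (fun s : ℝ => u + s • r) r τ := by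
    simpa using ((hasDerivAt_id τ).smul_const r).const_add u
  rw [inner_gradient_left]
  exact (hf _).hasFDerivAt.comp_hasDerivAt τ hline

lemma inner_gradient_add_smul_le (hf : ContDiff ℝ 2 f)
    (hH : LipschitzWith K (fderiv ℝ (gradient f))) (u r : E) {τ : ℝ} (hτ : 0 ≤ τ) :
    ⟪gradient f (u + τ • r), r⟫ ≤ ⟪gradient f u, r⟫ + τ * ⟪fderiv ℝ (gradient f) u r, r⟫
      + τ ^ 2 * (K * ‖r‖ ^ 3) := by
  have htaylor := norm_gradient_sub_sub_fderiv_le hf hH u (u + τ • r)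
  rw [add_sub_cancel_left, norm_smul, Real.norm_of_nonneg hτ] at htaylor
  have := (real_inner_le_norm _ r).trans (mul_le_mul_of_nonneg_right htaylor (norm_nonneg r))
  rw [inner_sub_left, inner_sub_left, map_smul, real_inner_smul_left] at this
  nlinarith

lemma le_quadratic_taylor_add_cube (hf : ContDiff ℝ 2 f)
    (hH : LipschitzWith K (fderiv ℝ (gradient f))) (u v : E) :
    f v ≤ f u + ⟪gradient f u, v - u⟫
      + 1 / 2 * ⟪fderiv ℝ (gradient f) u (v - u), v - u⟫ + K / 3 * ‖v - u‖ ^ 3 := by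
  set r := v - u
  set a := ⟪gradient f u, r⟫
  set b := ⟪fderiv ℝ (gradient f) u r, r⟫
  set c := K * ‖r‖ ^ 3
  let q : ℝ → ℝ := fun τ => τ * a + τ ^ 2 / 2 * b + τ ^ 3 / 3 * c - f (u + τ • r)
  have hq : ∀ τ, HasDerivAt q (a + τ * b + τ ^ 2 * c - ⟪gradient f (u + τ • r), r⟫) τ := by
    intro τ
    have hpoly := (((hasDerivAt_id τ).mul_const a).add
      (((hasDerivAt_pow 2 τ).div_const 2).mul_const b)).add
      (((hasDerivAt_pow 3 τ).div_const 3).mul_const c)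
    refine (hpoly.sub
      (hasDerivAt_comp_add_smul (hf.differentiable two_ne_zero) u r τ)).congr_deriv ?_
    norm_num
  have hmono : MonotoneOn q (Set.Icc 0 1) := by
    refine monotoneOn_of_deriv_nonneg (convex_Icc 0 1)
      (fun τ _ => (hq τ).continuousAt.continuousWithinAt)
      (fun τ _ => (hq τ).differentiableAt.differentiableWithinAt) fun τ hτ => ?_
    rw [interior_Icc] at hτ
    rw [(hq τ).deriv, sub_nonneg]
    exact inner_gradient_add_smul_le hf hH u r hτ.1.le
  have := hmono (Set.left_mem_Icc.2 zero_le_one) (Set.right_mem_Icc.2 zero_le_one) zero_le_one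
  simp only [q, zero_smul, add_zero, one_smul, r, add_sub_cancel] at this
  linarith

lemma le_sub_of_cubic_model_le (hf : ContDiff ℝ 2 f)
    (hH : LipschitzWith K (fderiv ℝ (gradient f))) (ψ : E → ℝ) {x y : E} {B : E →L[ℝ] E}
    {σ : ℝ} (hdec : f x + ⟪gradient f x, y - x⟫ + 1 / 2 * ⟪B (y - x), y - x⟫
      + σ / 6 * ‖y - x‖ ^ 3 + ψ y ≤ f x + ψ x) :
    (σ / 6 - K / 3) * ‖y - x‖ ^ 3 - 1 / 2 * ‖B - fderiv ℝ (gradient f) x‖ * ‖y - x‖ ^ 2 ≤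
      (f x + ψ x) - (f y + ψ y) := by
  have htaylor := le_quadratic_taylor_add_cube hf hH x y
  have hB : ⟪fderiv ℝ (gradient f) x (y - x), y - x⟫ - ⟪B (y - x), y - x⟫ ≤
      ‖B - fderiv ℝ (gradient f) x‖ * ‖y - x‖ ^ 2 := by
    rw [← inner_sub_left, ← sub_apply, norm_sub_rev B, sq, ← mul_assoc]
    exact (real_inner_le_norm _ _).trans
      (mul_le_mul_of_nonneg_right (ContinuousLinearMap.le_opNorm _ _) (norm_nonneg _))
  linarith

lemma norm_gradient_add_le_of_norm_cubic_model_le (hf : ContDiff ℝ 2 f)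
    (hH : LipschitzWith K (fderiv ℝ (gradient f))) {x y g : E} {B : E →L[ℝ] E} {σ : ℝ}
    (hσ : 0 ≤ σ)
    (hmodel : ‖gradient f x + B (y - x) + (σ / 2 * ‖y - x‖) • (y - x) + g‖ ≤
      σ / 4 * ‖y - x‖ ^ 2) :
    ‖gradient f y + g‖ ≤
      (K + 3 * σ / 4) * ‖y - x‖ ^ 2 + ‖B - fderiv ℝ (gradient f) x‖ * ‖y - x‖ := by
  set e₁ := gradient f y - gradient f x - fderiv ℝ (gradient f) x (y - x)
  set e₂ := (B - fderiv ℝ (gradient f) x) (y - x)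
  set e₃ := gradient f x + B (y - x) + (σ / 2 * ‖y - x‖) • (y - x) + g
  set e₄ := (σ / 2 * ‖y - x‖) • (y - x)
  have hdecomp : gradient f y + g = e₁ - e₂ + e₃ - e₄ := by
    simp only [e₁, e₂, e₃, e₄, sub_apply]; abel
  have he₁ : ‖e₁‖ ≤ K * ‖y - x‖ ^ 2 := norm_gradient_sub_sub_fderiv_le hf hH x y
  have he₂ : ‖e₂‖ ≤ ‖B - fderiv ℝ (gradient f) x‖ * ‖y - x‖ := ContinuousLinearMap.le_opNorm _ _
  have he₄ : ‖e₄‖ = σ / 2 * ‖y - x‖ ^ 2 := by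
    rw [norm_smul, Real.norm_of_nonneg (by positivity), mul_assoc, ← sq]
  rw [hdecomp]
  linarith [norm_sub_le (e₁ - e₂ + e₃) e₄, norm_add_le (e₁ - e₂) e₃, norm_sub_le e₁ e₂]

lemma norm_sub_fderiv_gradient_le (hH : LipschitzWith K (fderiv ℝ (gradient f)))
    (B : E →L[ℝ] E) (x : ℕ → E) (t : ℕ) :
    ‖B - fderiv ℝ (gradient f) (x t)‖ ≤
      ‖B - fderiv ℝ (gradient f) (x 0)‖ + K * ∑ s ∈ range t, ‖x (s + 1) - x s‖ := by
  have hdist : ‖x 0 - x t‖ ≤ ∑ s ∈ range t, ‖x (s + 1) - x s‖ := by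
    rw [← dist_eq_norm]
    refine (dist_le_range_sum_dist x t).trans_eq (sum_congr rfl fun s _ => ?_)
    rw [dist_comm, dist_eq_norm]
  calc ‖B - fderiv ℝ (gradient f) (x t)‖
      ≤ ‖B - fderiv ℝ (gradient f) (x 0)‖
          + ‖fderiv ℝ (gradient f) (x 0) - fderiv ℝ (gradient f) (x t)‖ :=
        norm_sub_le_norm_sub_add_norm_sub _ _ _
    _ ≤ _ := by gcongr; exact (hH.norm_sub_le _ _).trans (by gcongr)

end

lemma rpow_three_halves {x : ℝ} (hx : 0 ≤ x) : x ^ (3 / 2 : ℝ) = √x ^ 3 := by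
  rw [Real.rpow_div_two_eq_sqrt _ hx]
  norm_cast

lemma three_mul_mul_sq_le {x y : ℝ} (hx : 0 ≤ x) (hy : 0 ≤ y) :
    3 * x * y ^ 2 ≤ x ^ 3 + 2 * y ^ 3 := by
  nlinarith [mul_nonneg (sq_nonneg (x - y)) (by positivity : 0 ≤ x + 2 * y)]

lemma add_pow_three_le {x y : ℝ} (hx : 0 ≤ x) (hy : 0 ≤ y) :
    (x + y) ^ 3 ≤ 4 * (x ^ 3 + y ^ 3) := by
  nlinarith [mul_nonneg (sq_nonneg (x - y)) (add_nonneg hx hy)]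

lemma pow_three_le_of_sq_le_mul_add {a b c : ℝ} (ha : 0 ≤ a) (hb : 0 ≤ b) (hc : 0 ≤ c)
    (h : a ^ 2 ≤ b * (b + c)) : a ^ 3 ≤ 4 * (b ^ 3 + c ^ 3) := by
  have hM : a ≤ 3 / 2 * max b c := by
    refine le_of_sq_le_sq ?_ (by positivity)
    nlinarith [le_max_left b c, le_max_right b c]
  calc a ^ 3 ≤ (3 / 2 * max b c) ^ 3 := pow_le_pow_left₀ ha hM 3
    _ ≤ 4 * (b ^ 3 + c ^ 3) := by
      rcases max_choice b c with h' | h' <;> rw [h'] <;>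
        nlinarith [pow_nonneg hb 3, pow_nonneg hc 3]

lemma pow_three_sum_range_le {R : ℕ → ℝ} (hR : ∀ t, 0 ≤ R t) {t m : ℕ} (htm : t ≤ m) :
    (∑ s ∈ range t, R s) ^ 3 ≤ (m : ℝ) ^ 2 * ∑ s ∈ range m, R s ^ 3 :=
  calc (∑ s ∈ range t, R s) ^ 3 ≤ (t : ℝ) ^ 2 * ∑ s ∈ range t, R s ^ 3 := by
        simpa using pow_sum_le_card_mul_sum_pow (s := range t) (fun s _ => hR s) 2
    _ ≤ (m : ℝ) ^ 2 * ∑ s ∈ range m, R s ^ 3 :=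
        mul_le_mul (by gcongr)
          (sum_le_sum_of_subset_of_nonneg (range_subset_range.mpr htm)
            fun s _ _ => pow_nonneg (hR s) 3)
          (sum_nonneg fun s _ => pow_nonneg (hR s) 3) (by positivity)

lemma sum_range_pow_three_le {m : ℕ} {δ L : ℝ} {R D : ℕ → ℝ} (hδ : 0 ≤ δ) (hL : 0 ≤ L)
    (hR : ∀ t, 0 ≤ R t) (hD0 : ∀ t, 0 ≤ D t) (hD : ∀ t, D t ≤ δ + L * ∑ s ∈ range t, R s) :
    ∑ t ∈ range m, D t ^ 3 ≤ 4 * m * δ ^ 3 + 4 * (m * L) ^ 3 * ∑ t ∈ range m, R t ^ 3 := by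
  have hstep : ∀ t ∈ range m,
      D t ^ 3 ≤ 4 * δ ^ 3 + 4 * L ^ 3 * ((m : ℝ) ^ 2 * ∑ s ∈ range m, R s ^ 3) := by
    intro t ht
    calc D t ^ 3 ≤ (δ + L * ∑ s ∈ range t, R s) ^ 3 := pow_le_pow_left₀ (hD0 t) (hD t) 3
      _ ≤ 4 * δ ^ 3 + 4 * L ^ 3 * (∑ s ∈ range t, R s) ^ 3 := by
        rw [mul_assoc, ← mul_add, ← mul_pow]
        exact add_pow_three_le hδ (mul_nonneg hL (sum_nonneg fun s _ => hR s))
      _ ≤ _ := by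
        gcongr
        exact pow_three_sum_range_le hR (mem_range.mp ht).le
  calc ∑ t ∈ range m, D t ^ 3
      ≤ ∑ t ∈ range m, (4 * δ ^ 3 + 4 * L ^ 3 * ((m : ℝ) ^ 2 * ∑ s ∈ range m, R s ^ 3)) :=
        sum_le_sum hstep
    _ = _ := by rw [sum_const, card_range, nsmul_eq_mul]; ring

lemma le_sq_mul_of_cubic_decrease_le {σ L D R p : ℝ} (hσ : 0 ≤ σ) (hL : 12 * L ≤ σ)
    (hD : 0 ≤ D) (hR : 0 ≤ R) (hp : (σ / 6 - L / 3) * R ^ 3 - 1 / 2 * D * R ^ 2 ≤ p) :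
    σ ^ 3 * R ^ 3 / 18 - 8 / 3 * D ^ 3 ≤ σ ^ 2 * p := by
  have hyoung := three_mul_mul_sq_le hD (by positivity : 0 ≤ σ * R / 4)
  nlinarith [mul_le_mul_of_nonneg_left hp (sq_nonneg σ),
    mul_le_mul_of_nonneg_right hL (by positivity : 0 ≤ σ ^ 2 * R ^ 3)]

theorem le_sum_of_cubic_steps {m : ℕ} {σ L δ ε : ℝ} {R D p : ℕ → ℝ}
    (hσ : 0 < σ) (hε : 0 ≤ ε) (hL : 0 ≤ L) (hmL : 12 * (m * L) ≤ σ) (hδ0 : 0 ≤ δ)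
    (hδ : 65536 * δ ^ 3 ≤ σ ^ (3 / 2 : ℝ) * ε ^ (3 / 2 : ℝ))
    (hR : ∀ t, 0 ≤ R t) (hD0 : ∀ t, 0 ≤ D t) (hD : ∀ t, D t ≤ δ + L * ∑ s ∈ range t, R s)
    (hp : ∀ t < m, (σ / 6 - L / 3) * R t ^ 3 - 1 / 2 * D t * R t ^ 2 ≤ p t)
    (hg : ∀ t < m, ε ≤ (L + 3 * σ / 4) * R t ^ 2 + D t * R t) :
    m * ε ^ (3 / 2 : ℝ) / (2 * 192 * √σ) ≤ ∑ t ∈ range m, p t := by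
  have hL12 : ∀ t < m, 12 * L ≤ σ := fun t ht =>
    le_trans (by gcongr; exact le_mul_of_one_le_left hL (by exact_mod_cast ht.pos)) hmL
  rw [rpow_three_halves hσ.le, rpow_three_halves hε] at hδ
  rw [rpow_three_halves hε]
  obtain ⟨s, hs, rfl⟩ : ∃ s, 0 < s ∧ σ = s ^ 2 :=
    ⟨√σ, Real.sqrt_pos.2 hσ, (Real.sq_sqrt hσ.le).symm⟩
  obtain ⟨e, he, rfl⟩ : ∃ e, 0 ≤ e ∧ ε = e ^ 2 :=
    ⟨√ε, Real.sqrt_nonneg ε, (Real.sq_sqrt hε).symm⟩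
  rw [Real.sqrt_sq hs.le, Real.sqrt_sq he] at hδ ⊢
  have hT := sum_range_pow_three_le (m := m) hδ0 hL hR hD0 hD
  set S := ∑ t ∈ range m, R t ^ 3
  set T := ∑ t ∈ range m, D t ^ 3
  have hprogress : (s ^ 2) ^ 3 * S / 18 - 8 / 3 * T ≤ (s ^ 2) ^ 2 * ∑ t ∈ range m, p t := by
    have := sum_le_sum fun t ht => le_sq_mul_of_cubic_decrease_le hσ.le
      (hL12 t (mem_range.1 ht)) (hD0 t) (hR t) (hp t (mem_range.1 ht))
    rwa [sum_sub_distrib, ← sum_div, ← mul_sum, ← mul_sum, ← mul_sum] at this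
  have hgrad : m * (e * s) ^ 3 ≤ 4 * ((s ^ 2) ^ 3 * S + T) := by
    have hstep : ∀ t ∈ range m, (e * s) ^ 3 ≤ 4 * ((s ^ 2) ^ 3 * R t ^ 3 + D t ^ 3) := by
      intro t ht
      rw [← mul_pow]
      have hσR : 0 ≤ s ^ 2 * R t := by have := hR t; positivity
      refine pow_three_le_of_sq_le_mul_add (by positivity) hσR (hD0 t) ?_
      have hgt := mul_le_mul_of_nonneg_left (hg t (mem_range.1 ht)) (sq_nonneg s)
      have hLt := hL12 t (mem_range.1 ht)
      nlinarith [mul_le_mul_of_nonneg_right hLt (by positivity : 0 ≤ s ^ 2 * R t ^ 2)]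
    have := sum_le_sum hstep
    rwa [sum_const, card_range, nsmul_eq_mul, ← mul_sum, sum_add_distrib, ← mul_sum] at this
  have hmL3 : 1728 * (m * L) ^ 3 ≤ (s ^ 2) ^ 3 := by
    linarith [pow_le_pow_left₀ (by positivity) hmL 3]
  have hS : 0 ≤ S := sum_nonneg fun t _ => pow_nonneg (hR t) 3
  -- `T ≤ 4 m δ³ + σ³ S / 432` and `m δ³ ≤ m (e s)³ / 65536`, so the two block estimates give
  -- `384 σ² ∑ p ≥ 4.7 m (e s)³ - 4200 m δ³ ≥ m (e s)³`
  have key : m * (e * s) ^ 3 ≤ 384 * s ^ 4 * ∑ t ∈ range m, p t := by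
    have h1 := mul_le_mul_of_nonneg_right hmL3 hS
    have h2 := mul_le_mul_of_nonneg_left hδ (Nat.cast_nonneg (α := ℝ) m)
    have h3 : 0 ≤ S * s ^ 6 := by positivity
    ring_nf at h1 h2 hT hprogress hgrad ⊢
    linarith
  rw [div_le_iff₀ (by positivity)]
  refine le_of_mul_le_mul_right ?_ (pow_pos hs 3)
  linarith

lemma pos_and_hessian_error_cube_le {n L σ ε h : ℝ} (hn : 0 ≤ n) (hL : 0 ≤ L) (hσ : 0 ≤ σ)
    (hε : 0 ≤ ε) (hh : 0 < h)
    (hhle : h ≤ (3 * σ ^ ((3 : ℝ) / 2) * ε ^ ((3 : ℝ) / 2)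
      / (2 ^ 7 * 192 * n ^ ((3 : ℝ) / 2) * L ^ 3)) ^ ((1 : ℝ) / 3)) :
    0 < σ ∧ 65536 * (√n * L / 2 * h) ^ 3 ≤ σ ^ (3 / 2 : ℝ) * ε ^ (3 / 2 : ℝ) := by
  rw [rpow_three_halves hσ, rpow_three_halves hε] at hhle ⊢
  rw [rpow_three_halves hn] at hhle
  set X := 3 * √σ ^ 3 * √ε ^ 3 / (2 ^ 7 * 192 * √n ^ 3 * L ^ 3)
  have hX : 0 ≤ X := by positivity
  have hhX : h ^ 3 ≤ X := by
    rw [one_div, Real.le_rpow_inv_iff_of_pos hh.le hX (by norm_num)] at hhle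
    exact_mod_cast hhle
  -- `0 < h ≤ X ^ (1/3)` rules out the junk value `X = 0` of a vanishing numerator or denominator
  have hXpos : 0 < X := (pow_pos hh 3).trans_le hhX
  have hn0 : √n ≠ 0 := fun h0 => by simp [X, h0] at hXpos
  have hL0 : L ≠ 0 := fun h0 => by simp [X, h0] at hXpos
  refine ⟨hσ.lt_of_ne fun h0 => by simp [X, ← h0] at hXpos, ?_⟩
  calc 65536 * (√n * L / 2 * h) ^ 3 = 8192 * (√n ^ 3 * L ^ 3) * h ^ 3 := by ring
    _ ≤ 8192 * (√n ^ 3 * L ^ 3) * X := by gcongr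
    _ = √σ ^ 3 * √ε ^ 3 := by simp only [X]; field_simp; ring

theorem stmt_10_general {n : ℕ}
    (f ψ : EuclideanSpace ℝ (Fin n) → ℝ)
    (L : ℝ) (hL : 0 ≤ L)
    (hf : ContDiff ℝ 2 f)
    (hLip : ∀ u v : EuclideanSpace ℝ (Fin n),
      ‖fderiv ℝ (gradient f) v - fderiv ℝ (gradient f) u‖ ≤ L * ‖v - u‖)
    (ε : ℝ) (hε : 0 < ε) (m : ℕ)
    (x : ℕ → EuclideanSpace ℝ (Fin n))
    (σ h : ℝ)
    (hσ : σ ≥ 2 ^ 4 * ((2 : ℝ) / 3) ^ ((1 : ℝ) / 3) * m * L)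
    (hh : 0 < h)
    (hhle : h ≤ (3 * σ ^ ((3 : ℝ) / 2) * ε ^ ((3 : ℝ) / 2)
      / (2 ^ 7 * 192 * (n : ℝ) ^ ((3 : ℝ) / 2) * L ^ 3)) ^ ((1 : ℝ) / 3))
    (B : EuclideanSpace ℝ (Fin n) →L[ℝ] EuclideanSpace ℝ (Fin n))
    (hB : ‖B - fderiv ℝ (gradient f) (x 0)‖ ≤ Real.sqrt n * L / 2 * h)
    (ψ' : ℕ → EuclideanSpace ℝ (Fin n))
    (hdec : ∀ t < m,
      f (x t) + ⟪gradient f (x t), x (t + 1) - x t⟫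
        + 1 / 2 * ⟪B (x (t + 1) - x t), x (t + 1) - x t⟫
        + σ / 6 * ‖x (t + 1) - x t‖ ^ 3 + ψ (x (t + 1)) ≤ f (x t) + ψ (x t))
    (hmodel : ∀ t < m,
      ‖gradient f (x t) + B (x (t + 1) - x t)
          + (σ / 2 * ‖x (t + 1) - x t‖) • (x (t + 1) - x t) + ψ' (t + 1)‖ ≤
        σ / 4 * ‖x (t + 1) - x t‖ ^ 2) :
    (∃ t, 1 ≤ t ∧ t ≤ m ∧ ‖gradient f (x t) + ψ' t‖ ≤ ε) ∨
      (f (x 0) + ψ (x 0)) - (f (x m) + ψ (x m)) ≥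
        m * ε ^ ((3 : ℝ) / 2) / (2 * 192 * Real.sqrt σ) := by
  lift L to ℝ≥0 using hL
  have hH : LipschitzWith L (fderiv ℝ (gradient f)) :=
    LipschitzWith.of_dist_le_mul fun u v => by simpa only [dist_eq_norm] using hLip v u
  have hκ : (3 : ℝ) / 4 ≤ (2 / 3) ^ ((1 : ℝ) / 3) := by
    rw [one_div, Real.le_rpow_inv_iff_of_pos (by norm_num) (by norm_num) (by norm_num)]
    norm_num
  have hmL : 12 * (m * (L : ℝ)) ≤ σ :=
    calc 12 * (m * (L : ℝ)) = 2 ^ 4 * (3 / 4) * (m * L) := by norm_num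
      _ ≤ 2 ^ 4 * (2 / 3) ^ ((1 : ℝ) / 3) * (m * L) := by gcongr
      _ ≤ σ := by rw [← mul_assoc]; exact hσ
  obtain ⟨hσ0, hδ⟩ := pos_and_hessian_error_cube_le (Nat.cast_nonneg n) L.2
    ((by positivity : (0 : ℝ) ≤ 12 * (m * L)).trans hmL) hε.le hh hhle
  refine or_iff_not_imp_left.2 fun hsmall => ?_
  have hsum := le_sum_of_cubic_steps (δ := √n * L / 2 * h) (R := fun t => ‖x (t + 1) - x t‖)
    (D := fun t => ‖B - fderiv ℝ (gradient f) (x t)‖)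
    (p := fun t => (f (x t) + ψ (x t)) - (f (x (t + 1)) + ψ (x (t + 1))))
    hσ0 hε.le L.2 hmL (by positivity) hδ (fun _ => norm_nonneg _) (fun _ => norm_nonneg _)
    (fun t => (norm_sub_fderiv_gradient_le hH B x t).trans (add_le_add hB le_rfl))
    (fun t ht => le_sub_of_cubic_model_le hf hH ψ (hdec t ht))
    (fun t ht => (not_le.1 fun hle => hsmall ⟨t + 1, by omega, by omega, hle⟩).le.trans
      (norm_gradient_add_le_of_norm_cubic_model_le hf hH hσ0.le (hmodel t ht)))
  rwa [sum_range_sub'] at hsum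

/-- Lemma 7 of the paper: guarantee for a block of `m` inexact cubic Newton
steps with a lazy finite-difference Hessian approximation computed at the anchor point `x 0`:
either some iterate has (sub)gradient norm at most `ε`, or the block makes functional progress
at least `m·ε^{3/2}/(2·192·σ^{1/2})`. -/
theorem stmt_10 {n : ℕ} (hn : 1 ≤ n)
    (f ψ : EuclideanSpace ℝ (Fin n) → ℝ) (Q : Set (EuclideanSpace ℝ (Fin n)))
    (L : ℝ) (hL : 0 ≤ L)
    (hf : ContDiff ℝ 2 f)
    (hLip : ∀ u v : EuclideanSpace ℝ (Fin n),
      ‖fderiv ℝ (gradient f) v - fderiv ℝ (gradient f) u‖ ≤ L * ‖v - u‖)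
    (hQconv : Convex ℝ Q) (hψconv : ConvexOn ℝ Q ψ)
    (hFbdd : BddBelow (Set.range fun y => f y + ψ y))
    (ε : ℝ) (hε : 0 < ε) (m : ℕ) (hm : 1 ≤ m)
    (x : ℕ → EuclideanSpace ℝ (Fin n)) (hxQ : ∀ t ≤ m, x t ∈ Q)
    (σ h : ℝ)
    (hσ : σ ≥ 2 ^ 4 * ((2 : ℝ) / 3) ^ ((1 : ℝ) / 3) * m * L)
    (hh : 0 < h)
    (hhle : h ≤ (3 * σ ^ ((3 : ℝ) / 2) * ε ^ ((3 : ℝ) / 2)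
      / (2 ^ 7 * 192 * (n : ℝ) ^ ((3 : ℝ) / 2) * L ^ 3)) ^ ((1 : ℝ) / 3))
    (B : EuclideanSpace ℝ (Fin n) →L[ℝ] EuclideanSpace ℝ (Fin n))
    (hBsym : ∀ u v : EuclideanSpace ℝ (Fin n), ⟪B u, v⟫ = ⟪u, B v⟫)
    (hB : ‖B - fderiv ℝ (gradient f) (x 0)‖ ≤ Real.sqrt n * L / 2 * h)
    (ψ' : ℕ → EuclideanSpace ℝ (Fin n))
    (hψ' : ∀ t < m, ∀ y : EuclideanSpace ℝ (Fin n),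
      ψ (x (t + 1)) + ⟪ψ' (t + 1), y - x (t + 1)⟫ ≤ ψ y)
    (hdec : ∀ t < m,
      f (x t) + ⟪gradient f (x t), x (t + 1) - x t⟫
        + 1 / 2 * ⟪B (x (t + 1) - x t), x (t + 1) - x t⟫
        + σ / 6 * ‖x (t + 1) - x t‖ ^ 3 + ψ (x (t + 1)) ≤ f (x t) + ψ (x t))
    (hmodel : ∀ t < m,
      ‖gradient f (x t) + B (x (t + 1) - x t)
          + (σ / 2 * ‖x (t + 1) - x t‖) • (x (t + 1) - x t) + ψ' (t + 1)‖ ≤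
        σ / 4 * ‖x (t + 1) - x t‖ ^ 2) :
    (∃ t, 1 ≤ t ∧ t ≤ m ∧ ‖gradient f (x t) + ψ' t‖ ≤ ε) ∨
      (f (x 0) + ψ (x 0)) - (f (x m) + ψ (x m)) ≥
        m * ε ^ ((3 : ℝ) / 2) / (2 * 192 * Real.sqrt σ) :=
  stmt_10_general f ψ L hL hf hLip ε hε m x σ h hσ hh hhle B hB ψ' hdec hmodel
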